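/- arXiv:2211.03272 — 3 statements merged into one kernel-verified Lean document; each statement's English description precedes it below -/
import Mathlib

section
/- Let G be a graph on n vertices with no matching of size s + 1, and let v₁, …, vₙ be its vertices listed in decreasing order of degree. Then the number of edges of G is at most d(v₁) + d(v₂) + ⋯ + d(v_{2s}), the sum of the 2s largest degrees. -/
open SimpleGraph Finset

/-- `Contains G H` means `G` contains a copy of `H`: an injective map preserving adjacency
(i.e. an injective graph homomorphism; isolated vertices of `H` need distinct hosts in `G`). -/
def Contains {V W : Type*} (G : SimpleGraph V) (H : SimpleGraph W) : Prop :=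
  ∃ f : W → V, Function.Injective f ∧ ∀ ⦃a b : W⦄, H.Adj a b → G.Adj (f a) (f b)

/-- `matchingGraph t` is the matching `M_t` consisting of `t` independent edges. -/
def matchingGraph (t : ℕ) : SimpleGraph (Fin t × Fin 2) :=
  SimpleGraph.fromRel (fun a b => a.1 = b.1)

/-- The number of edges of a graph. -/
noncomputable def edgeCount {V : Type*} (G : SimpleGraph V) : ℕ := G.edgeSet.ncard

/-- `exNum n P` is the maximum number of edges of an `n`-vertex graph satisfying the
freeness condition `P` (the extremal/Turán number). -/
noncomputable def exNum (n : ℕ) (P : SimpleGraph (Fin n) → Prop) : ℕ :=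
  sSup {m | ∃ G : SimpleGraph (Fin n), P G ∧ m = edgeCount G}

/-- `I` is a deletable color class of `F`: an independent set whose deletion decreases the
chromatic number (equivalently, a color class in some proper coloring of `F` with `χ(F)`
colors). `F.induce Iᶜ` is `F − I`, with isolated vertices retained. -/
def colorClassDel {V : Type*} (F : SimpleGraph V) (I : Set V) : Prop :=
  (∀ a ∈ I, ∀ b ∈ I, ¬ F.Adj a b) ∧ (F.induce Iᶜ).chromaticNumber < F.chromaticNumber

/-- `A` is a color class of a proper two-coloring of `F`: both `A` and its complement are
independent sets. -/
def twoColorClass {V : Type*} (F : SimpleGraph V) (A : Set V) : Prop :=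
  (∀ a ∈ A, ∀ b ∈ A, ¬ F.Adj a b) ∧ (∀ a ∈ Aᶜ, ∀ b ∈ Aᶜ, ¬ F.Adj a b)

/-!
The vertices of a maximal matching (at most `2s` of them) form a vertex cover, since an edge
missing them would extend the matching. Summing degrees over a vertex cover counts every edge at
least once, and a sum of at most `2s` degrees is at most the sum of the `2s` largest ones.
-/

lemma matchingGraph_adj {t : ℕ} {p q : Fin t × Fin 2} :
    (matchingGraph t).Adj p q ↔ p.1 = q.1 ∧ p.2 ≠ q.2 := by
  simp only [matchingGraph, fromRel_adj, ne_eq, Prod.ext_iff]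
  grind

lemma contains_matchingGraph_iff {V : Type*} {G : SimpleGraph V} {t : ℕ} :
    Contains G (matchingGraph t) ↔
      ∃ f : Fin t × Fin 2 → V, Function.Injective f ∧ ∀ i, G.Adj (f (i, 0)) (f (i, 1)) := by
  refine ⟨fun ⟨f, hf, hfG⟩ => ⟨f, hf, fun i => hfG (matchingGraph_adj.2 ⟨rfl, by simp⟩)⟩, ?_⟩
  rintro ⟨f, hf, hfG⟩
  refine ⟨f, hf, fun ⟨i, j⟩ ⟨k, l⟩ hadj => ?_⟩
  obtain ⟨rfl, hjl⟩ := matchingGraph_adj.1 hadj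
  fin_cases j <;> fin_cases l <;> simp_all [(hfG i).symm]

lemma contains_matchingGraph_succ {V : Type*} {G : SimpleGraph V} {t : ℕ}
    {f : Fin t × Fin 2 → V} (hf : Function.Injective f) (hfG : ∀ i, G.Adj (f (i, 0)) (f (i, 1)))
    {a b : V} (hab : G.Adj a b) (ha : a ∉ Set.range f) (hb : b ∉ Set.range f) :
    Contains G (matchingGraph (t + 1)) := by
  let e : Fin (t + 1) × Fin 2 ≃ Fin 2 ⊕ Fin t × Fin 2 :=
    ((finSuccEquiv t).prodCongr (Equiv.refl _)).trans optionProdEquiv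
  have hab_inj : Function.Injective ![a, b] := by
    intro j l
    fin_cases j <;> fin_cases l <;> simp [hab.ne, hab.ne.symm]
  have hdisj : ∀ j p, ![a, b] j ≠ f p := by
    intro j p
    fin_cases j
    exacts [fun h => ha ⟨p, h.symm⟩, fun h => hb ⟨p, h.symm⟩]
  refine contains_matchingGraph_iff.2
    ⟨Sum.elim ![a, b] f ∘ e, (hab_inj.sumElim hf hdisj).comp e.injective, fun i => ?_⟩
  cases i using Fin.cases <;> simp [e, hab, hfG]

theorem exists_isVertexCover_card_le_of_not_contains {V : Type*} {G : SimpleGraph V} {s : ℕ}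
    (h : ¬ Contains G (matchingGraph (s + 1))) :
    ∃ S : Finset V, #S ≤ 2 * s ∧ G.IsVertexCover S := by
  classical
  by_contra! hS
  suffices ∀ t ≤ s + 1, Contains G (matchingGraph t) from h (this _ le_rfl)
  intro t ht
  induction t with
  | zero => exact ⟨isEmptyElim, fun p => isEmptyElim p, fun p => isEmptyElim p⟩
  | succ t ih =>
    obtain ⟨f, hf, hfG⟩ := contains_matchingGraph_iff.1 (ih (by omega))
    have hcard : #(univ.image f) ≤ 2 * s := by
      rw [card_image_of_injective _ hf, card_univ, Fintype.card_prod, Fintype.card_fin,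
        Fintype.card_fin]
      omega
    obtain ⟨a, b, hab, ha, hb⟩ : ∃ a b, G.Adj a b ∧ a ∉ Set.range f ∧ b ∉ Set.range f := by
      simpa [IsVertexCover] using hS _ hcard
    exact contains_matchingGraph_succ hf hfG hab ha hb

theorem SimpleGraph.IsVertexCover.card_edgeFinset_le_sum_degree {V : Type*} [Fintype V]
    [DecidableEq V] {G : SimpleGraph V} [DecidableRel G.Adj] {S : Finset V}
    (hS : G.IsVertexCover S) : #G.edgeFinset ≤ ∑ v ∈ S, G.degree v := by
  have hsub : G.edgeFinset ⊆ S.biUnion fun v => G.incidenceFinset v := by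
    intro e he
    induction e using Sym2.ind with
    | _ x y =>
      have hxy : G.Adj x y := mem_edgeFinset.1 he
      simp only [mem_biUnion, mem_incidenceFinset]
      rcases hS hxy with hx | hy
      exacts [⟨x, hx, G.mk'_mem_incidenceSet_left_iff.2 hxy⟩,
        ⟨y, hy, G.mk'_mem_incidenceSet_right_iff.2 hxy⟩]
  calc #G.edgeFinset ≤ #(S.biUnion fun v => G.incidenceFinset v) := card_le_card hsub
    _ ≤ ∑ v ∈ S, #(G.incidenceFinset v) := card_biUnion_le
    _ = ∑ v ∈ S, G.degree v := by simp only [card_incidenceFinset_eq_degree]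

section Sums

variable {ι M : Type*} [AddCommMonoid M] [LinearOrder M] [IsOrderedAddMonoid M]
  [CanonicallyOrderedAdd M]

theorem Finset.sum_le_sum_of_card_le_of_forall_le {f : ι → M} {A B : Finset ι}
    (hcard : #A ≤ #B) (hAB : ∀ a ∈ A, ∀ b ∈ B, f a ≤ f b) : ∑ a ∈ A, f a ≤ ∑ b ∈ B, f b := by
  rcases A.eq_empty_or_nonempty with rfl | hA
  · simp
  calc ∑ a ∈ A, f a ≤ #A • A.sup' hA f := sum_le_card_nsmul _ _ _ fun a ha => le_sup' f ha
    _ ≤ #B • A.sup' hA f := nsmul_le_nsmul_left zero_le hcard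
    _ ≤ ∑ b ∈ B, f b :=
      card_nsmul_le_sum _ _ _ fun b hb => sup'_le _ _ fun a ha => hAB a ha b hb

theorem Antitone.sum_le_sum_filter_val_lt {n k : ℕ} {f : Fin n → M} (hf : Antitone f)
    {T : Finset (Fin n)} (hT : #T ≤ k) :
    ∑ i ∈ T, f i ≤ ∑ i ∈ univ.filter (fun i : Fin n => (i : ℕ) < k), f i := by
  set P := univ.filter (fun i : Fin n => (i : ℕ) < k)
  have hTP : #(T \ P) ≤ #(P \ T) := by
    rw [card_sdiff_le_card_sdiff_iff, Fin.card_filter_val_lt]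
    exact le_min (card_le_univ T |>.trans_eq (Fintype.card_fin n)) hT
  rw [← sum_inter_add_sum_sdiff T P, ← sum_inter_add_sum_sdiff P T, inter_comm]
  gcongr 1
  refine sum_le_sum_of_card_le_of_forall_le hTP fun a ha b hb => hf ?_
  simp only [P, mem_sdiff, mem_filter, mem_univ, true_and] at ha hb
  exact Fin.le_def.2 (by omega)

end Sums

/-- If an `n`-vertex graph `G` has no matching of size `s + 1` and its vertices are listed
in decreasing order of degree, then the number of edges of `G` is at most the sum of the
`2s` largest degrees. -/
theorem edges_le_sum_largest_degrees {n : ℕ} (G : SimpleGraph (Fin n))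
    [DecidableRel G.Adj] (s : ℕ) (h : ¬ Contains G (matchingGraph (s + 1)))
    (v : Equiv.Perm (Fin n))
    (hv : ∀ i j : Fin n, i ≤ j → G.degree (v j) ≤ G.degree (v i)) :
    G.edgeFinset.card ≤
      ∑ i ∈ Finset.univ.filter (fun i : Fin n => (i : ℕ) < 2 * s), G.degree (v i) := by
  obtain ⟨S, hScard, hS⟩ := exists_isVertexCover_card_le_of_not_contains h
  calc #G.edgeFinset ≤ ∑ u ∈ S, G.degree u := hS.card_edgeFinset_le_sum_degree
    _ = ∑ u ∈ (S.map v.symm.toEmbedding).map v.toEmbedding, G.degree u := by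
      rw [Finset.map_map]; simp
    _ = ∑ i ∈ S.map v.symm.toEmbedding, G.degree (v i) := sum_map _ _ _
    _ ≤ _ := Antitone.sum_le_sum_filter_val_lt (fun i j => hv i j) (by simpa using hScard)
end

section
/- Let F be a bipartite graph with at least one edge, let p = p(F) be the smallest possible order of a color class in a proper two-coloring of F, and let s ≥ p be a fixed integer. Then ex(n, {F, M_{s+1}}) = (p − 1)n + O(1); that is, there exists a constant C = C(F, s) such that for all n, |ex(n, {F, M_{s+1}}) − (p − 1)n| ≤ C. -/
open SimpleGraph Finset

/-!
Lower bound: `K_{p-1, n-p+1}` has about `(p - 1) n` edges, contains no `F` (a copy would give a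
colour class of `F` of size at most `p - 1`) and no `M_{s+1}` (every edge meets the side of size
`p - 1 ≤ s`).

Upper bound: a graph `G` without `M_{s+1}` has a vertex cover `B` of at most `2s` vertices (the
vertices of a maximal matching). A vertex outside `B` has all its neighbours in `B`. If more than
`C(2s, p) · |V(F)|` of them had degree at least `p`, then by pigeonhole `|V(F)|` of them would
share `p` common neighbours, giving a `K_{p, |V(F)| - p}`, which contains `F`. So apart from `O(1)`
edges inside `B` and `O(1)` high-degree vertices, every vertex outside `B` contributes at most
`p - 1` edges.
-/

namespace SimpleGraph

variable {V W α β : Type*}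

theorem contains_iff_isContained {G : SimpleGraph V} {H : SimpleGraph W} :
    Contains G H ↔ H ⊑ G :=
  ⟨fun ⟨f, hf, hadj⟩ => ⟨⟨⟨f, fun h => hadj h⟩, hf⟩⟩,
    fun ⟨f⟩ => ⟨f, f.injective, fun _ _ h => f.toHom.map_adj h⟩⟩

theorem edgeCount_eq_card_edgeFinset (G : SimpleGraph V) [Fintype G.edgeSet] :
    edgeCount G = #G.edgeFinset :=
  Set.ncard_eq_toFinset_card' _

theorem Iso.edgeCount_eq {G : SimpleGraph V} {H : SimpleGraph W} (e : G ≃g H) :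
    edgeCount G = edgeCount H := by
  simpa only [edgeCount, Nat.card_coe_set_eq] using Nat.card_congr e.mapEdgeSet

theorem edgeCount_completeBipartiteGraph [Fintype α] [Fintype β] :
    edgeCount (completeBipartiteGraph α β) = Fintype.card α * Fintype.card β := by
  simp [edgeCount, Set.ncard_def, encard_edgeSet_completeBipartiteGraph,
    ENat.card_eq_coe_fintype_card]

theorem matchingGraph_adj_zero_one {t : ℕ} (k : Fin t) :
    (matchingGraph t).Adj (k, 0) (k, 1) := by
  simp [matchingGraph]

theorem matchingGraph_isContained_of_injective {G : SimpleGraph V} {t : ℕ}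
    (f : Fin t × Fin 2 → V) (hf : Function.Injective f)
    (hadj : ∀ k, G.Adj (f (k, 0)) (f (k, 1))) : matchingGraph t ⊑ G := by
  refine ⟨⟨⟨f, ?_⟩, hf⟩⟩
  rintro ⟨k, i⟩ ⟨l, j⟩ h
  simp only [matchingGraph, fromRel_adj, ne_eq, eq_comm (a := l), or_self] at h
  obtain ⟨hne, rfl⟩ := h
  fin_cases i <;> fin_cases j
  exacts [absurd rfl hne, hadj k, (hadj k).symm, absurd rfl hne]

theorem matchingGraph_succ_isContained {G : SimpleGraph V} {t : ℕ}
    (f : Copy (matchingGraph t) G) {u v : V} (huv : G.Adj u v)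
    (hu : u ∉ Set.range f) (hv : v ∉ Set.range f) : matchingGraph (t + 1) ⊑ G := by
  have hf : Function.Injective f := f.injective
  refine matchingGraph_isContained_of_injective
    (fun x => Fin.lastCases (![u, v] x.2) (fun k => f (k, x.2)) x.1) ?_ fun k => ?_
  · rintro ⟨k, i⟩ ⟨l, j⟩ h
    induction k using Fin.lastCases <;> induction l using Fin.lastCases <;>
      fin_cases i <;> fin_cases j <;> simp_all [hf.eq_iff]
  · induction k using Fin.lastCases
    · simpa using huv
    · simpa using f.toHom.map_adj (matchingGraph_adj_zero_one _)

theorem exists_isVertexCover_card_le {G : SimpleGraph V} {s : ℕ}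
    (h : (matchingGraph (s + 1)).Free G) :
    ∃ B : Finset V, #B ≤ 2 * s ∧ G.IsVertexCover B := by
  classical
  let P t := matchingGraph t ⊑ G
  set t := Nat.findGreatest P s
  have hts : t ≤ s := Nat.findGreatest_le s
  obtain ⟨f⟩ : P t := Nat.findGreatest_spec (Nat.zero_le s) IsContained.of_isEmpty
  refine ⟨univ.image f, ?_, fun u v huv => ?_⟩
  · calc #(univ.image f) ≤ t * 2 := by simpa using card_image_le (s := univ) (f := f)
      _ ≤ 2 * s := by rw [mul_comm]; exact Nat.mul_le_mul_left 2 hts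
  · by_contra! hcon
    have hsucc :=
      matchingGraph_succ_isContained f huv (by simpa using hcon.1) (by simpa using hcon.2)
    rcases hts.lt_or_eq with hlt | heq
    · exact Nat.findGreatest_is_greatest (Nat.lt_succ_self t) hlt hsucc
    · exact h (heq ▸ hsucc)

section Counting

variable [Fintype V] (G : SimpleGraph V) [DecidableRel G.Adj]

theorem card_edgeFinset_le_card_sym2_add_sum_degree [DecidableEq V] (B : Finset V) :
    #G.edgeFinset ≤ #B.sym2 + ∑ v ∈ Bᶜ, G.degree v := by
  have hsub : G.edgeFinset ⊆ B.sym2 ∪ Bᶜ.biUnion fun v => G.incidenceFinset v := by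
    intro e he
    by_cases heB : e ∈ B.sym2
    · exact mem_union_left _ heB
    · obtain ⟨v, hve, hvB⟩ : ∃ v ∈ e, v ∉ B := by simpa [mem_sym2_iff] using heB
      refine mem_union_right _ (mem_biUnion.2 ⟨v, mem_compl.2 hvB, ?_⟩)
      exact (G.mem_incidenceFinset v e).2 ⟨mem_edgeFinset.1 he, hve⟩
  calc #G.edgeFinset ≤ #(B.sym2 ∪ Bᶜ.biUnion fun v => G.incidenceFinset v) :=
        card_le_card hsub
    _ ≤ #B.sym2 + #(Bᶜ.biUnion fun v => G.incidenceFinset v) := card_union_le _ _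
    _ ≤ #B.sym2 + ∑ v ∈ Bᶜ, G.degree v := by
      gcongr
      exact card_biUnion_le.trans_eq (sum_congr rfl fun v _ => G.card_incidenceFinset_eq_degree v)

variable {G}

theorem IsVertexCover.neighborFinset_subset {B : Finset V} (hB : G.IsVertexCover B) {v : V}
    (hv : v ∉ B) : G.neighborFinset v ⊆ B := fun w hw =>
  (hB ((G.mem_neighborFinset v w).1 hw)).resolve_left hv

theorem IsVertexCover.card_filter_le_degree_le [DecidableEq V] [Fintype α] [Fintype β]
    {B : Finset V} (hB : G.IsVertexCover B) (hK : (completeBipartiteGraph α β).Free G) :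
    #{v ∈ Bᶜ | Fintype.card α ≤ G.degree v} ≤
      (#B).choose (Fintype.card α) * Fintype.card β := by
  set D := {v ∈ Bᶜ | Fintype.card α ≤ G.degree v}
  by_contra! hlt
  choose! S hS using fun v (hv : v ∈ D) =>
    exists_subset_card_eq (s := G.neighborFinset v) (by simpa using (mem_filter.1 hv).2)
  have hmaps : ∀ v ∈ D, S v ∈ B.powersetCard (Fintype.card α) := fun v hv =>
    mem_powersetCard.2 ⟨(hS v hv).1.trans
      (hB.neighborFinset_subset (mem_compl.1 (mem_filter.1 hv).1)), (hS v hv).2⟩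
  obtain ⟨L, hL, hfiber⟩ :=
    exists_lt_card_fiber_of_mul_lt_card_of_maps_to hmaps (by rwa [card_powersetCard])
  obtain ⟨R, hR, hRcard⟩ := exists_subset_card_eq hfiber.le
  refine hK (completeBipartiteGraph_isContained_iff.2
    ⟨L, R, (mem_powersetCard.1 hL).2, hRcard, fun x hx y hy => ?_⟩)
  obtain ⟨hyD, rfl⟩ := mem_filter.1 (hR hy)
  exact ((G.mem_neighborFinset y x).1 ((hS y hyD).1 hx)).symm

theorem IsVertexCover.sum_degree_compl_le [DecidableEq V] [Fintype α] [Fintype β]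
    {B : Finset V} (hB : G.IsVertexCover B) (hK : (completeBipartiteGraph α β).Free G) :
    ∑ v ∈ Bᶜ, G.degree v ≤ (Fintype.card α - 1) * Fintype.card V +
      (#B).choose (Fintype.card α) * Fintype.card β * #B := by
  set a := Fintype.card α
  rw [← sum_filter_not_add_sum_filter _ (fun v => a ≤ G.degree v)]
  gcongr
  · calc ∑ v ∈ Bᶜ with ¬ a ≤ G.degree v, G.degree v
        ≤ #{v ∈ Bᶜ | ¬ a ≤ G.degree v} * (a - 1) :=
          sum_le_card_nsmul _ _ _ fun v hv => by have := (mem_filter.1 hv).2; omega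
      _ ≤ (a - 1) * Fintype.card V := by rw [mul_comm]; gcongr; exact card_le_univ _
  · calc ∑ v ∈ Bᶜ with a ≤ G.degree v, G.degree v
        ≤ #{v ∈ Bᶜ | a ≤ G.degree v} * #B :=
          sum_le_card_nsmul _ _ _ fun v hv => by
            rw [← card_neighborFinset_eq_degree]
            exact card_le_card (hB.neighborFinset_subset (mem_compl.1 (mem_filter.1 hv).1))
      _ ≤ (#B).choose a * Fintype.card β * #B := by
          gcongr; exact hB.card_filter_le_degree_le hK

theorem card_edgeFinset_le_of_free [DecidableEq V] [Fintype α] [Fintype β] {s : ℕ}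
    (hK : (completeBipartiteGraph α β).Free G) (hM : (matchingGraph (s + 1)).Free G) :
    #G.edgeFinset ≤ (Fintype.card α - 1) * Fintype.card V +
      ((2 * s + 1).choose 2 + (2 * s).choose (Fintype.card α) * Fintype.card β * (2 * s)) := by
  obtain ⟨B, hBs, hB⟩ := exists_isVertexCover_card_le hM
  have hsym2 : #B.sym2 ≤ (2 * s + 1).choose 2 := by
    rw [card_sym2]; exact Nat.choose_le_choose 2 (by omega)
  have hprod : (#B).choose (Fintype.card α) * Fintype.card β * #B ≤
      (2 * s).choose (Fintype.card α) * Fintype.card β * (2 * s) := by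
    gcongr
  have := card_edgeFinset_le_card_sym2_add_sum_degree G B
  have := hB.sum_degree_compl_le hK
  omega

end Counting

theorem free_completeBipartiteGraph_of_lt_ncard {F : SimpleGraph V} [Fintype α]
    (hF : ∀ A, twoColorClass F A → Fintype.card α < A.ncard) :
    F.Free (completeBipartiteGraph α β) := by
  rintro ⟨f⟩
  have hside : ∀ ⦃a b⦄, F.Adj a b → ((f a).isLeft ↔ ¬ (f b).isLeft) := fun a b h => by
    have := f.toHom.map_adj h
    cases ha : f a <;> cases hb : f b <;> simp_all
  refine (hF {v | (f v).isLeft} ⟨fun a ha b hb h => ?_, fun a ha b hb h => ?_⟩).not_ge ?_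
  · exact (hside h).1 ha hb
  · exact ha ((hside h).2 hb)
  calc {v | (f v).isLeft}.ncard ≤ (Set.range (Sum.inl : α → α ⊕ β)).ncard :=
        Set.ncard_le_ncard_of_injOn f (fun v hv => Sum.isLeft_iff.1 hv |>.imp fun _ => Eq.symm)
          f.injective.injOn
    _ = Fintype.card α := by
        rw [Set.ncard_range_of_injective Sum.inl_injective, Nat.card_eq_fintype_card]

end SimpleGraph

open SimpleGraph

theorem twoColorClass.nonempty {V : Type*} {F : SimpleGraph V} {A : Set V}
    (hA : twoColorClass F A) (hF : F.edgeSet.Nonempty) : A.Nonempty := by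
  obtain ⟨e, he⟩ := hF
  induction e using Sym2.ind with | _ a b => ?_
  by_contra hempty
  rw [Set.not_nonempty_iff_eq_empty] at hempty
  exact hA.2 a (by simp [hempty]) b (by simp [hempty]) he

theorem twoColorClass.le_ncard_matchingGraph {t : ℕ} {A : Set (Fin t × Fin 2)}
    (hA : twoColorClass (matchingGraph t) A) : t ≤ A.ncard := by
  have himage : Prod.fst '' A = Set.univ := by
    refine Set.eq_univ_of_forall fun k => ?_
    by_contra! hk
    simp only [Set.mem_image, Prod.exists, exists_and_right, exists_eq_right, not_exists] at hk
    exact hA.2 _ (hk 0) _ (hk 1) (matchingGraph_adj_zero_one k)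
  calc t = (Prod.fst '' A).ncard := by simp [himage]
    _ ≤ A.ncard := Set.ncard_image_le

theorem twoColorClass.isContained_completeBipartiteGraph {V : Type*} {F : SimpleGraph V}
    {A : Set V} [DecidablePred (· ∈ A)] (hA : twoColorClass F A) :
    F ⊑ completeBipartiteGraph A ↑Aᶜ := by
  refine ⟨⟨⟨(Equiv.Set.sumCompl A).symm, fun {a b} h => ?_⟩,
    (Equiv.Set.sumCompl A).symm.injective⟩⟩
  by_cases ha : a ∈ A <;> by_cases hb : b ∈ A
  · exact absurd h (hA.1 a ha b hb)
  · simp [Equiv.Set.sumCompl_symm_apply_of_mem, Equiv.Set.sumCompl_symm_apply_of_notMem, ha, hb]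
  · simp [Equiv.Set.sumCompl_symm_apply_of_mem, Equiv.Set.sumCompl_symm_apply_of_notMem, ha, hb]
  · exact absurd h (hA.2 a ha b hb)

theorem twoColorClass.edgeCount_le {V W : Type*} [Fintype V] [Fintype W] {F : SimpleGraph V}
    {A : Set V} (hA : twoColorClass F A) {s : ℕ} {G : SimpleGraph W} (hF : F.Free G)
    (hM : (matchingGraph (s + 1)).Free G) :
    edgeCount G ≤ (A.ncard - 1) * Fintype.card W +
      ((2 * s + 1).choose 2 + (2 * s).choose A.ncard * Aᶜ.ncard * (2 * s)) := by
  classical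
  simpa only [edgeCount_eq_card_edgeFinset, ← Nat.card_eq_fintype_card, Nat.card_coe_set_eq] using
    card_edgeFinset_le_of_free (fun hK => hF (hA.isContained_completeBipartiteGraph.trans hK)) hM

theorem exNum_le {n C : ℕ} {P : SimpleGraph (Fin n) → Prop}
    (hC : ∀ G, P G → edgeCount G ≤ C) : exNum n P ≤ C :=
  csSup_le' (by rintro _ ⟨G, hG, rfl⟩; exact hC G hG)

-- `exNum` is an `sSup` in `ℕ`, which is junk (`0`) on unbounded sets; `hC` rules that out.
theorem edgeCount_le_exNum {n C : ℕ} {P : SimpleGraph (Fin n) → Prop}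
    (hC : ∀ G, P G → edgeCount G ≤ C) {G : SimpleGraph (Fin n)} (hG : P G) :
    edgeCount G ≤ exNum n P :=
  le_csSup ⟨C, by rintro _ ⟨G, hG, rfl⟩; exact hC G hG⟩ ⟨G, hG, rfl⟩

theorem mul_le_exNum_add {V : Type*} {F : SimpleGraph V} {q s n C : ℕ}
    (hF : ∀ A, twoColorClass F A → q < A.ncard) (hqs : q ≤ s)
    (hC : ∀ G : SimpleGraph (Fin n), ¬ F ⊑ G → ¬ matchingGraph (s + 1) ⊑ G →
      edgeCount G ≤ C) :
    q * n ≤ exNum n (fun G => ¬ F ⊑ G ∧ ¬ matchingGraph (s + 1) ⊑ G) + q * q := by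
  rcases le_or_gt q n with hqn | hnq
  · have hcard : Fintype.card (Fin q ⊕ Fin (n - q)) = n := by
      simp only [Fintype.card_sum, Fintype.card_fin]; omega
    set K := completeBipartiteGraph (Fin q) (Fin (n - q))
    have e := K.overFinIso hcard
    have hFK : F.Free K := free_completeBipartiteGraph_of_lt_ncard (by simpa using hF)
    have hMK : (matchingGraph (s + 1)).Free K := free_completeBipartiteGraph_of_lt_ncard
      fun A hA => by simpa using (Nat.lt_succ_of_le hqs).trans_le hA.le_ncard_matchingGraph
    have hK := edgeCount_le_exNum
      (fun G (hG : ¬ F ⊑ G ∧ ¬ matchingGraph (s + 1) ⊑ G) => hC G hG.1 hG.2)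
      (G := K.overFin hcard)
      ⟨mt (isContained_congr_right e).2 hFK, mt (isContained_congr_right e).2 hMK⟩
    rw [← e.edgeCount_eq, edgeCount_completeBipartiteGraph, Fintype.card_fin,
      Fintype.card_fin] at hK
    have : q * n = q * (n - q) + q * q := by rw [← mul_add, Nat.sub_add_cancel hqn]
    omega
  · have := Nat.mul_le_mul_left q hnq.le
    omega

/-- **Proposition 2 (asymptotics).** If `F` is bipartite with at least one edge and
`p = p(F) ≤ s` is the smallest order of a color class in a proper two-coloring of `F`,
then `ex(n, {F, M_{s+1}}) = (p − 1)n + O(1)`. -/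
theorem bipartite_extremal_asymptotic {V : Type*} [Fintype V] (F : SimpleGraph V)
    (hedge : F.edgeSet.Nonempty) (p s : ℕ)
    (hp : IsLeast {k : ℕ | ∃ A : Set V, twoColorClass F A ∧ A.ncard = k} p)
    (hps : p ≤ s) :
    ∃ C : ℤ, ∀ n : ℕ,
      |(exNum n (fun G => ¬ Contains G F ∧ ¬ Contains G (matchingGraph (s + 1))) : ℤ) -
          ((p : ℤ) - 1) * (n : ℤ)| ≤ C := by
  obtain ⟨⟨A, hA, rfl⟩, hmin⟩ := hp
  obtain ⟨q, hq⟩ : ∃ q, A.ncard = q + 1 :=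
    Nat.exists_eq_add_one.2 ((Set.ncard_pos A.toFinite).2 (hA.nonempty hedge))
  set C := (2 * s + 1).choose 2 + (2 * s).choose A.ncard * Aᶜ.ncard * (2 * s)
  have hupper (n : ℕ) (G : SimpleGraph (Fin n)) (hF : ¬ F ⊑ G)
      (hM : ¬ matchingGraph (s + 1) ⊑ G) : edgeCount G ≤ q * n + C := by
    have hbound := hA.edgeCount_le hF hM
    rwa [show A.ncard - 1 = q by omega, Fintype.card_fin] at hbound
  refine ⟨C + q * q, fun n => ?_⟩
  simp only [contains_iff_isContained]
  have hle := exNum_le fun G (hG : ¬ F ⊑ G ∧ _) => hupper n G hG.1 hG.2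
  have hge := mul_le_exNum_add (fun B hB => hq ▸ hmin ⟨B, hB, rfl⟩) (by omega) (hupper n)
  zify at hle hge
  rw [hq, Nat.cast_succ, add_sub_cancel_right, abs_le]
  constructor <;> nlinarith
end

section
/- Let P_{2ℓ} denote the path on 2ℓ vertices and let 2 ≤ ℓ ≤ s. Then for sufficiently large n, ex(n, {P_{2ℓ}, M_{s+1}}) = (ℓ − 1)(n − ℓ + 1) + C(ℓ−1, 2). -/
/-!
Write `a = ℓ - 1`. The complete split graph `K_a ∨ \bar K_{n-a}` has every edge meeting its `a`
hub vertices, so it contains neither `M_{a+1}` nor `P_{2ℓ} ⊇ M_ℓ`; it has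
`a (n - a) + C(a, 2)` edges.

Conversely let `G` avoid `P_{2ℓ}` and `M_{s+1}`. If `a + 2` vertices have the same neighbourhood
`S` with `|S| = a`, then no path `u z z'` with `u ∈ S` leaves `S` (it would extend through the
biclique to a `P_{2ℓ}`), so `S` together with its outside neighbours `D` spans at most
`C(a, 2) + a (|D| - a)` edges and is cut off from the rest, which by Erdős–Gallai spans at most
`a (n - |D|)` edges. Otherwise `G` has a vertex cover `B` of size at most `2s`, and every vertex
outside `B` sends its edges into `B`: only `O_s(1)` of them have degree `> a` (else `a + 1` of
them share `a + 1` neighbours, a `K_{ℓ,ℓ} ⊇ P_{2ℓ}`) or degree exactly `a` (at most `a + 1` per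
`a`-subset of `B`), so `e(G) ≤ (a - 1) n + O_s(1)`, below the target for large `n`.

Erdős–Gallai (`e ≤ (k - 1) m` without `P_{2k}`) follows by deleting vertices of degree `< k` and
splitting components, down to a connected graph of minimum degree `≥ k` on `≥ 2k` vertices; there
a longest path on fewer than `2k` vertices would have crossing edges at its ends, hence lie on a
cycle, which connectivity extends to a longer path.
-/

open SimpleGraph Finset

theorem Contains.trans {U W X : Type*} {G : SimpleGraph U} {H : SimpleGraph W}
    {K : SimpleGraph X} (hGH : Contains G H) (hHK : Contains H K) : Contains G K := by
  obtain ⟨f, hf, hfa⟩ := hGH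
  obtain ⟨g, hg, hga⟩ := hHK
  exact ⟨f ∘ g, hf.comp hg, fun _ _ hab => hfa (hga hab)⟩

theorem contains_pathGraph_of_isChain {V : Type*} {G : SimpleGraph V} (L : List V)
    (hnodup : L.Nodup) (hchain : L.IsChain G.Adj) : Contains G (pathGraph L.length) := by
  refine ⟨fun i => L[i], fun i j hij => Fin.ext (hnodup.getElem_inj_iff.mp hij), ?_⟩
  intro a b hab
  rcases pathGraph_adj.mp hab with h | h
  · simpa [← h] using List.isChain_iff_getElem.mp hchain a (by omega)
  · simpa [← h] using (List.isChain_iff_getElem.mp hchain b (by omega)).symm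

theorem matchingGraph_adj_s11 {t : ℕ} {x y : Fin t × Fin 2} :
    (matchingGraph t).Adj x y ↔ x ≠ y ∧ x.1 = y.1 := by
  simp [matchingGraph, eq_comm]

theorem matchingGraph_adj_swap {t : ℕ} (i : Fin t) (j : Fin 2) :
    (matchingGraph t).Adj (i, j) (i, 1 - j) :=
  matchingGraph_adj_s11.mpr ⟨by fin_cases j <;> simp, rfl⟩

theorem pathGraph_contains_matchingGraph (t : ℕ) :
    Contains (pathGraph (2 * t)) (matchingGraph t) := by
  refine ⟨fun p => ⟨2 * p.1 + p.2, by omega⟩, fun p q h => ?_, fun p q h => ?_⟩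
  · simp only [Fin.mk.injEq] at h
    exact Prod.ext (Fin.ext (by omega)) (Fin.ext (by omega))
  · obtain ⟨hne, h1⟩ := matchingGraph_adj_s11.mp h
    have h2 : (p.2 : ℕ) ≠ q.2 := fun h2 => hne (Prod.ext h1 (Fin.ext h2))
    have := congrArg Fin.val h1
    rw [pathGraph_adj]
    dsimp only
    omega

section Matching

variable {V : Type*} {G : SimpleGraph V}

theorem contains_matchingGraph_succ_of_adj {t : ℕ} {u v : V} (huv : G.Adj u v)
    (h : Contains ((G.deleteIncidenceSet u).deleteIncidenceSet v) (matchingGraph t)) :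
    Contains G (matchingGraph (t + 1)) := by
  obtain ⟨f, hf, hfa⟩ := h
  have hfuv : ∀ p, f p ≠ u ∧ f p ≠ v := fun p => by
    have := hfa (matchingGraph_adj_swap p.1 p.2)
    simp only [deleteIncidenceSet_adj] at this
    exact ⟨this.1.2.1, this.2.1⟩
  let g : Fin (t + 1) × Fin 2 → V := fun p =>
    Fin.lastCases (if p.2 = 0 then u else v) (fun i => f (i, p.2)) p.1
  refine ⟨g, ?_, ?_⟩
  · rintro ⟨i, j⟩ ⟨i', j'⟩ hg
    have := huv.ne
    induction i using Fin.lastCases <;> induction i' using Fin.lastCases <;>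
      simp only [g, Fin.lastCases_last, Fin.lastCases_castSucc] at hg <;>
      fin_cases j <;> fin_cases j' <;> simp_all [hf.eq_iff, eq_comm]
  · rintro ⟨i, j⟩ ⟨i', j'⟩ hadj
    obtain ⟨hne, rfl : i = i'⟩ := matchingGraph_adj_s11.mp hadj
    have hj : j ≠ j' := fun h => hne (by rw [h])
    induction i using Fin.lastCases with
    | last => fin_cases j <;> fin_cases j' <;> simp_all [g, huv.symm]
    | cast i =>
      have := hfa (a := (i, j)) (b := (i, j')) (matchingGraph_adj_s11.mpr ⟨by simpa using hj, rfl⟩)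
      simp only [deleteIncidenceSet_adj] at this
      simpa [g] using this.1.1

/-- The vertices of a maximal matching cover all edges. -/
theorem exists_isVertexCover_card_le_of_not_contains_matchingGraph [DecidableEq V] (s : ℕ)
    (h : ¬ Contains G (matchingGraph (s + 1))) :
    ∃ B : Finset V, #B ≤ 2 * s ∧ G.IsVertexCover B := by
  induction s generalizing G with
  | zero =>
    refine ⟨∅, le_rfl, fun u v huv => (h (contains_matchingGraph_succ_of_adj huv ?_)).elim⟩
    exact ⟨fun p => p.1.elim0, fun p => p.1.elim0, fun p => p.1.elim0⟩
  | succ s ih =>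
    by_cases hE : ∃ u v, G.Adj u v
    · obtain ⟨u, v, huv⟩ := hE
      obtain ⟨B, hB, hcover⟩ := ih fun h' => h (contains_matchingGraph_succ_of_adj huv h')
      refine ⟨insert u (insert v B), ?_, fun x y hxy => ?_⟩
      · grind [card_insert_le]
      · by_cases hx : x = u ∨ x = v
        · left; aesop
        by_cases hy : y = u ∨ y = v
        · right; aesop
        have := @hcover x y (by simp only [deleteIncidenceSet_adj]; tauto)
        aesop
    · exact ⟨∅, by simp, fun x y hxy => (hE ⟨x, y, hxy⟩).elim⟩

theorem not_contains_matchingGraph_of_isVertexCover {t : ℕ} (B : Finset V)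
    (hB : G.IsVertexCover B) (ht : #B < t) : ¬ Contains G (matchingGraph t) := by
  classical
  rintro ⟨f, hf, hfa⟩
  let g : Fin t → V := fun i => if f (i, 0) ∈ B then f (i, 0) else f (i, 1)
  have hgB : ∀ i, g i ∈ B := fun i => by
    have := hB (hfa (matchingGraph_adj_swap i 0))
    by_cases h : f (i, 0) ∈ B <;> simp_all [g]
  have hg : ∀ i, ∃ j, g i = f (i, j) := fun i => by
    by_cases h : f (i, 0) ∈ B
    · exact ⟨0, if_pos h⟩
    · exact ⟨1, if_neg h⟩
  have hginj : Function.Injective g := fun i i' hii' => by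
    obtain ⟨j, hj⟩ := hg i
    obtain ⟨j', hj'⟩ := hg i'
    exact congrArg Prod.fst (hf (hj.symm.trans (hii'.trans hj')))
  have := card_le_card_of_injOn (s := univ) g (fun i _ => hgB i) hginj.injOn
  rw [card_univ, Fintype.card_fin] at this
  omega

end Matching

namespace List

variable {α : Type*} {R : α → α → Prop}

def weave : List α → List α → List α
  | x :: xs, a :: as => x :: a :: weave xs as
  | _, _ => []

theorem weave_perm : ∀ {xs as : List α}, as.length = xs.length → (weave xs as).Perm (xs ++ as)
  | [], [], _ => .refl _
  | x :: xs, a :: as, h => by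
    simp only [weave, cons_append, perm_cons]
    exact ((weave_perm (by simpa using h)).cons a).trans perm_middle.symm

theorem head?_weave : ∀ {xs as : List α}, as.length = xs.length → (weave xs as).head? = xs.head?
  | [], [], _ => rfl
  | _ :: _, _ :: _, _ => rfl

theorem isChain_weave [Std.Symm R] :
    ∀ {xs as : List α}, as.length = xs.length → (∀ x ∈ xs, ∀ a ∈ as, R x a) →
      (weave xs as).IsChain R
  | [], [], _, _ => .nil
  | x :: xs, a :: as, h, hR => by
    have h' : as.length = xs.length := by simpa using h
    refine .cons_cons (hR x (by simp) a (by simp)) (.cons ?_ ?_)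
    · exact isChain_weave h' fun y hy b hb => hR y (by simp [hy]) b (by simp [hb])
    · rw [head?_weave h']
      exact fun y hy => symm (hR y (mem_cons_of_mem x (mem_of_mem_head? hy)) a (by simp))

theorem IsChain.cycleChain_append_reverse [Std.Symm R] {P Q : List α} (h : (P ++ Q).IsChain R)
    (hP : P ≠ []) (hQ : Q ≠ []) (hhead : R (P.head hP) (Q.head hQ))
    (hlast : R (P.getLast hP) (Q.getLast hQ)) : Cycle.Chain R (P ++ Q.reverse : List α) := by
  have hne : P ++ Q.reverse ≠ [] := by simp [hP]
  rw [Cycle.chain_ne_nil R hne, getLast_append_of_ne_nil hne (by simpa), getLast_reverse]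
  refine .cons (h.left_of_append.append
    (isChain_reverse.mpr (h.right_of_append.imp fun _ _ h => symm h)) ?_) ?_
  · simp [getLast?_eq_some_getLast hP, head?_reverse, getLast?_eq_some_getLast hQ, hlast]
  · simp [head?_append_of_ne_nil _ hP, head?_eq_some_head hP, symm hhead]

end List

theorem Cycle.Chain.exists_isChain_cons {α : Type*} {R : α → α → Prop} {l : List α}
    (h : Cycle.Chain R (l : Cycle α)) {c : α} (hc : c ∈ l) :
    ∃ t, (c :: t).Perm l ∧ (c :: t).IsChain R := by
  obtain ⟨P, Q, rfl⟩ := List.append_of_mem hc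
  have hrot : ((P ++ c :: Q : List α) : Cycle α) = ((c :: (Q ++ P) : List α) : Cycle α) :=
    Cycle.coe_eq_coe.mpr (by simpa using List.isRotated_append (l := P) (l' := c :: Q))
  rw [hrot, Cycle.chain_coe_cons] at h
  exact ⟨Q ++ P, by simpa using List.perm_append_comm (l₁ := c :: Q) (l₂ := P),
    h.prefix ⟨[c], by simp⟩⟩

section Biclique

variable {V : Type*} {G : SimpleGraph V}

theorem contains_pathGraph_of_biclique {k : ℕ} {X T : Finset V} (hX : #X = k) (hT : #T = k)
    (hXT : Disjoint X T) (hadj : ∀ x ∈ X, ∀ t ∈ T, G.Adj x t) :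
    Contains G (pathGraph (2 * k)) := by
  have := G.symm
  have hlen : T.toList.length = X.toList.length := by simp [hX, hT]
  have hperm := List.weave_perm hlen
  have hnodup : (X.toList ++ T.toList).Nodup := List.nodup_append.mpr
    ⟨X.nodup_toList, T.nodup_toList, fun x hx t ht => by
      rintro rfl; exact Finset.disjoint_left.mp hXT (by simpa using hx) (by simpa using ht)⟩
  have hL := contains_pathGraph_of_isChain _ (hperm.nodup_iff.mpr hnodup)
    (List.isChain_weave hlen fun x hx t ht => hadj x (by simpa using hx) t (by simpa using ht))
  rwa [hperm.length_eq, List.length_append, length_toList, length_toList, hX, hT,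
    ← two_mul] at hL

/-- The path is `z' z u y₁ s₂ y₂ … s_a y_a`, alternating between `S = {u, s₂, …, s_a}` and
`a` vertices `yᵢ` of `X \ {z, z'}`. -/
theorem contains_pathGraph_of_biclique_of_adj_adj [DecidableEq V] {a : ℕ} {S X : Finset V}
    {u z z' : V} (hS : #S = a) (hX : a + 2 ≤ #X) (hXS : Disjoint X S)
    (hadj : ∀ x ∈ X, ∀ t ∈ S, G.Adj x t) (hu : u ∈ S) (hz : z ∉ S) (hz' : z' ∉ S)
    (huz : G.Adj u z) (hzz' : G.Adj z z') : Contains G (pathGraph (2 * a + 2)) := by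
  have := G.symm
  obtain ⟨Y, hYX, hY⟩ : ∃ Y ⊆ X \ {z, z'}, #Y = a := exists_subset_card_eq
    (by have := le_card_sdiff {z, z'} X; have := card_le_two (a := z) (b := z'); omega)
  set xs := u :: (S.erase u).toList
  have hxs : ∀ v ∈ xs, v ∈ S := by simp [xs, hu]
  have hY' : ∀ v ∈ Y.toList, v ∈ X ∧ v ≠ z ∧ v ≠ z' := by
    intro v hv
    have := hYX (mem_toList.mp hv)
    simp only [mem_sdiff, mem_insert, mem_singleton] at this
    tauto
  have hlen : Y.toList.length = xs.length := by
    have := card_pos.mpr ⟨u, hu⟩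
    simp only [length_toList, hY, List.length_cons, card_erase_of_mem hu, hS, xs]
    omega
  have hperm := List.weave_perm hlen
  have hnodup : (xs ++ Y.toList).Nodup := List.nodup_append.mpr
    ⟨List.nodup_cons.mpr ⟨by simp, nodup_toList _⟩, Y.nodup_toList, fun x hx y hy => by
      rintro rfl; exact Finset.disjoint_left.mp hXS (hY' x hy).1 (hxs x hx)⟩
  have hmem : ∀ v ∈ xs.weave Y.toList, v ≠ z ∧ v ≠ z' := by
    intro v hv
    rcases List.mem_append.mp (hperm.subset hv) with h | h
    · exact ⟨fun h' => hz (h' ▸ hxs v h), fun h' => hz' (h' ▸ hxs v h)⟩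
    · exact (hY' v h).2
  have hL := contains_pathGraph_of_isChain (G := G) (z' :: z :: xs.weave Y.toList)
    (List.nodup_cons.mpr ⟨by simpa [hzz'.ne.symm] using fun h => (hmem z' h).2 rfl,
      List.nodup_cons.mpr ⟨fun h => (hmem z h).1 rfl, hperm.nodup_iff.mpr hnodup⟩⟩)
    (.cons_cons hzz'.symm (.cons (List.isChain_weave hlen fun x hx y hy =>
      (hadj y (hY' y hy).1 x (hxs x hx)).symm) (by simp [List.head?_weave hlen, xs, huz.symm])))
  rwa [List.length_cons, List.length_cons, hperm.length_eq, List.length_append, hlen,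
    ← two_mul, show xs.length = a by simp [← hlen, hY]] at hL

end Biclique

namespace SimpleGraph

variable {V : Type*}

def restrict (G : SimpleGraph V) (A : Finset V) : SimpleGraph V where
  Adj x y := G.Adj x y ∧ x ∈ A ∧ y ∈ A
  symm := ⟨fun _ _ h => ⟨h.1.symm, h.2.2, h.2.1⟩⟩
  loopless := ⟨fun _ h => G.irrefl h.1⟩

@[simp] theorem restrict_adj {G : SimpleGraph V} {A : Finset V} {x y : V} :
    (G.restrict A).Adj x y ↔ G.Adj x y ∧ x ∈ A ∧ y ∈ A := Iff.rfl

section EdgesWithin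

variable (G : SimpleGraph V) [DecidableEq V] [DecidableRel G.Adj]

instance (A : Finset V) : DecidableRel (G.restrict A).Adj :=
  fun _ _ => inferInstanceAs (Decidable (_ ∧ _ ∧ _))

variable [Fintype V]

def edgesWithin (A : Finset V) : ℕ := #(G.restrict A).edgeFinset

theorem edgesWithin_univ : G.edgesWithin univ = #G.edgeFinset := by
  rw [edgesWithin]
  congr 1
  ext e
  induction e
  simp

theorem degree_restrict_le (A : Finset V) (v : V) :
    (G.restrict A).degree v ≤ #(G.neighborFinset v ∩ A) := by
  rw [← card_neighborFinset_eq_degree]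
  exact card_le_card fun w hw => by simp_all

theorem edgesWithin_le_add_sum_degree (A B : Finset V) :
    G.edgesWithin A ≤ G.edgesWithin B + ∑ w ∈ A \ B, (G.restrict A).degree w := by
  have hsub : (G.restrict A).edgeFinset ⊆
      (G.restrict B).edgeFinset ∪ (A \ B).biUnion fun w => (G.restrict A).incidenceFinset w := by
    intro e he
    induction e with
    | _ x y =>
      simp only [mem_edgeFinset, mem_edgeSet, restrict_adj] at he
      simp only [mem_union, mem_edgeFinset, mem_edgeSet, restrict_adj, mem_biUnion, mem_sdiff,
        mem_incidenceFinset, incidenceSet, Set.mem_ofPred_eq, Sym2.mem_iff]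
      by_cases hx : x ∈ B <;> by_cases hy : y ∈ B
      · exact .inl ⟨he.1, hx, hy⟩
      all_goals first
        | exact .inr ⟨x, ⟨he.2.1, hx⟩, he, .inl rfl⟩
        | exact .inr ⟨y, ⟨he.2.2, hy⟩, he, .inr rfl⟩
  calc G.edgesWithin A
      ≤ G.edgesWithin B + #((A \ B).biUnion fun w => (G.restrict A).incidenceFinset w) :=
        (card_le_card hsub).trans (card_union_le _ _)
    _ ≤ _ := by
        gcongr
        exact card_biUnion_le.trans (by simp [card_incidenceFinset_eq_degree])

theorem edgesWithin_le_add_degree {A : Finset V} {v : V} (hv : v ∈ A) :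
    G.edgesWithin A ≤ G.edgesWithin (A.erase v) + (G.restrict A).degree v := by
  simpa [sdiff_erase_self hv] using G.edgesWithin_le_add_sum_degree A (A.erase v)

theorem edgesWithin_le_add_of_forall_not_adj {A B : Finset V}
    (hB : ∀ x ∈ B, ∀ y ∈ A \ B, ¬ G.Adj x y) :
    G.edgesWithin A ≤ G.edgesWithin B + G.edgesWithin (A \ B) := by
  refine (card_le_card fun e he => ?_).trans (card_union_le _ _)
  induction e with
  | _ x y =>
    simp only [mem_edgeFinset, mem_edgeSet, restrict_adj] at he
    simp only [mem_union, mem_edgeFinset, mem_edgeSet, restrict_adj, mem_sdiff]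
    by_cases hx : x ∈ B <;> by_cases hy : y ∈ B
    · exact .inl ⟨he.1, hx, hy⟩
    · exact (hB x hx y (mem_sdiff.mpr ⟨he.2.2, hy⟩) he.1).elim
    · exact (hB y hy x (mem_sdiff.mpr ⟨he.2.1, hx⟩) he.1.symm).elim
    · exact .inr ⟨he.1, ⟨he.2.1, hx⟩, he.2.2, hy⟩

theorem edgesWithin_le_choose (A : Finset V) : G.edgesWithin A ≤ (#A).choose 2 := by
  induction A using Finset.strongInduction with
  | _ A ih =>
    rcases A.eq_empty_or_nonempty with rfl | ⟨v, hv⟩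
    · have : G.restrict ∅ = ⊥ := by ext; simp
      simp [edgesWithin, this]
    have hdeg : (G.restrict A).degree v ≤ #(A.erase v) :=
      (G.degree_restrict_le A v).trans (card_le_card fun w hw => by
        simp only [mem_inter, mem_neighborFinset] at hw
        exact mem_erase.mpr ⟨hw.1.ne.symm, hw.2⟩)
    have := ih _ (erase_ssubset hv)
    have := G.edgesWithin_le_add_degree hv
    rw [← card_erase_add_one hv, Nat.choose_succ_left _ _ two_pos]
    norm_num [Nat.choose_one_right]
    omega

theorem edgesWithin_le_of_card_lt {k : ℕ} {A : Finset V} (hA : #A < 2 * k) :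
    G.edgesWithin A ≤ (k - 1) * #A := by
  refine (G.edgesWithin_le_choose A).trans ?_
  rw [Nat.choose_two_right]
  refine Nat.div_le_of_le_mul ?_
  calc #A * (#A - 1) ≤ #A * (2 * (k - 1)) := Nat.mul_le_mul_left _ (by omega)
    _ = 2 * ((k - 1) * #A) := by ring

end EdgesWithin

variable {G : SimpleGraph V} {A : Finset V} {L : List V}

def IsPathIn (G : SimpleGraph V) (A : Finset V) (L : List V) : Prop :=
  L.IsChain G.Adj ∧ L.Nodup ∧ ∀ v ∈ L, v ∈ A

def IsLongestPathIn (G : SimpleGraph V) (A : Finset V) (L : List V) : Prop :=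
  G.IsPathIn A L ∧ ∀ L', G.IsPathIn A L' → L'.length ≤ L.length

theorem IsPathIn.reverse (h : G.IsPathIn A L) : G.IsPathIn A L.reverse :=
  ⟨List.isChain_reverse.mpr (h.1.imp fun _ _ h => h.symm), List.nodup_reverse.mpr h.2.1,
    fun v hv => h.2.2 v (List.mem_reverse.mp hv)⟩

theorem IsPathIn.length_le [DecidableEq V] (h : G.IsPathIn A L) : L.length ≤ #A := by
  rw [← List.toFinset_card_of_nodup h.2.1]
  exact card_le_card fun v hv => h.2.2 v (List.mem_toFinset.mp hv)

theorem IsPathIn.contains_pathGraph (h : G.IsPathIn A L) : Contains G (pathGraph L.length) :=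
  contains_pathGraph_of_isChain L h.2.1 h.1

theorem exists_isLongestPathIn [DecidableEq V] (hA : A.Nonempty) :
    ∃ L, G.IsLongestPathIn A L ∧ 0 < L.length := by
  classical
  let P : ℕ → Prop := fun j => ∃ L, G.IsPathIn A L ∧ L.length = j
  obtain ⟨v, hv⟩ := hA
  have hP1 : P 1 := ⟨[v], ⟨.singleton v, List.nodup_singleton v, by simpa using hv⟩, rfl⟩
  have h1 : 1 ≤ #A := card_pos.mpr ⟨v, hv⟩
  obtain ⟨L, hL, hlen⟩ := Nat.findGreatest_spec h1 hP1
  refine ⟨L, ⟨hL, fun L' hL' => hlen ▸ Nat.le_findGreatest hL'.length_le ⟨L', hL', rfl⟩⟩, ?_⟩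
  have := Nat.le_findGreatest h1 hP1
  omega

theorem IsLongestPathIn.mem_of_adj_head (h : G.IsLongestPathIn A L) (hL : 0 < L.length)
    {w : V} (hw : w ∈ A) (hadj : G.Adj w L[0]) : w ∈ L := by
  by_contra hwL
  have hpath : G.IsPathIn A (w :: L) :=
    ⟨h.1.1.cons (by simp [List.head?_eq_getElem?, hL, hadj]),
      List.nodup_cons.mpr ⟨hwL, h.1.2.1⟩, by simpa [hw] using h.1.2.2⟩
  simpa using h.2 _ hpath

theorem IsLongestPathIn.mem_of_adj_getLast (h : G.IsLongestPathIn A L) (hL : 0 < L.length)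
    {w : V} (hw : w ∈ A) (hadj : G.Adj w L[L.length - 1]) : w ∈ L := by
  have hrev : G.IsLongestPathIn A L.reverse :=
    ⟨h.1.reverse, fun L' hL' => (h.2 L' hL').trans (by simp)⟩
  exact List.mem_reverse.mp (hrev.mem_of_adj_head (by simpa) hw (by simpa [List.getElem_reverse]))

theorem exists_isPathIn_length_succ_of_cycleChain {K : List V} (hK : K.Nodup)
    (hKA : ∀ v ∈ K, v ∈ A) (hcyc : Cycle.Chain G.Adj (K : Cycle V)) {w c : V} (hw : w ∈ A)
    (hwK : w ∉ K) (hc : c ∈ K) (hadj : G.Adj w c) :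
    ∃ L, G.IsPathIn A L ∧ L.length = K.length + 1 := by
  obtain ⟨t, hperm, hchain⟩ := hcyc.exists_isChain_cons hc
  refine ⟨w :: c :: t, ⟨hchain.cons (by simpa using hadj), ?_, ?_⟩, by simp [← hperm.length_eq]⟩
  · exact List.nodup_cons.mpr ⟨fun h => hwK (hperm.subset h), hperm.nodup_iff.mpr hK⟩
  · simpa [hw] using fun v hv => hKA v (hperm.subset hv)

theorem exists_restrict_adj_of_length_lt [DecidableEq V]
    (hconn : ∀ u ∈ A, ∀ v ∈ A, (G.restrict A).Reachable u v) (hLA : ∀ v ∈ L, v ∈ A)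
    (hL : L ≠ []) (hlt : L.length < #A) : ∃ w c, (G.restrict A).Adj w c ∧ w ∉ L ∧ c ∈ L := by
  obtain ⟨u, huA, huL⟩ : ∃ u ∈ A, u ∉ L := by
    by_contra! hAL
    have := card_le_card (s := A) (t := L.toFinset) fun v hv => List.mem_toFinset.mpr (hAL v hv)
    have := List.toFinset_card_le L
    omega
  obtain ⟨c₀, hc₀⟩ := List.exists_mem_of_ne_nil L hL
  obtain ⟨p⟩ := hconn u huA c₀ (hLA c₀ hc₀)
  obtain ⟨d, -, hd1, hd2⟩ := p.exists_boundary_dart {x | x ∉ L} huL (by simpa using hc₀)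
  exact ⟨_, _, d.adj, hd1, by simpa using hd2⟩

section Rotation

variable [Fintype V] [DecidableEq V] [DecidableRel G.Adj]

/-- Pigeonhole: by maximality the first vertex has at least `k` neighbours of the form `L[j + 1]`
and the last one at least `k` of the form `L[j]`, while `j` takes fewer than `2k` values. -/
theorem IsLongestPathIn.exists_crossing {k : ℕ} (h : G.IsLongestPathIn A L)
    (hL : 0 < L.length) (hk : L.length < 2 * k) (hfirst : k ≤ (G.restrict A).degree L[0])
    (hlast : k ≤ (G.restrict A).degree L[L.length - 1]) :
    ∃ P Q, ∃ (hP : P ≠ []) (hQ : Q ≠ []), P ++ Q = L ∧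
      G.Adj (P.head hP) (Q.head hQ) ∧ G.Adj (P.getLast hP) (Q.getLast hQ) := by
  let I : Finset (Fin (L.length - 1)) := {j | G.Adj L[0] (L[j.1 + 1]'(by omega))}
  let J : Finset (Fin (L.length - 1)) := {j | G.Adj (L[j.1]'(by omega)) L[L.length - 1]}
  have hI : k ≤ #I := by
    refine hfirst.trans ?_
    rw [← card_neighborFinset_eq_degree]
    refine (card_le_card fun w hw => ?_).trans (card_image_le (f := fun j => L[j.1 + 1]))
    simp only [mem_neighborFinset, restrict_adj] at hw
    obtain ⟨i, hi, rfl⟩ := List.mem_iff_getElem.mp (h.mem_of_adj_head hL hw.2.2 hw.1.symm)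
    obtain ⟨i, rfl⟩ : ∃ i', i = i' + 1 :=
      Nat.exists_eq_add_one.mpr (Nat.pos_of_ne_zero (by rintro rfl; exact G.irrefl hw.1))
    exact mem_image.mpr ⟨⟨i, by omega⟩, by simpa [I] using hw.1, rfl⟩
  have hJ : k ≤ #J := by
    refine hlast.trans ?_
    rw [← card_neighborFinset_eq_degree]
    refine (card_le_card fun w hw => ?_).trans (card_image_le (f := fun j => L[j.1]))
    simp only [mem_neighborFinset, restrict_adj] at hw
    obtain ⟨i, hi, rfl⟩ := List.mem_iff_getElem.mp (h.mem_of_adj_getLast hL hw.2.2 hw.1.symm)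
    have hi0 : i ≠ L.length - 1 := by rintro rfl; exact G.irrefl hw.1
    exact mem_image.mpr ⟨⟨i, by omega⟩, by simpa [J] using hw.1.symm, rfl⟩
  obtain ⟨j, hj⟩ := inter_nonempty_of_card_lt_card_add_card (subset_univ I) (subset_univ J)
    (by simp only [card_univ, Fintype.card_fin]; omega)
  simp only [mem_inter, mem_filter, mem_univ, true_and, I, J] at hj
  have hj1 : (j : ℕ) + 1 < L.length := Nat.add_lt_of_lt_sub j.isLt
  refine ⟨L.take (j + 1), L.drop (j + 1), by simpa using List.ne_nil_of_length_pos hL,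
    by simpa using hj1, L.take_append_drop _,
    by simpa [List.head_take, List.head_drop, List.head_eq_getElem] using hj.1, ?_⟩
  rw [List.getLast_take, List.getLast_drop, List.getLast_eq_getElem]
  simpa [List.getElem?_eq_getElem (show (j : ℕ) < L.length by omega)] using hj.2

/-- A longest path on fewer than `2k` vertices closes into a cycle through its crossing edges,
and an edge leaving that cycle yields a longer path. -/
theorem IsLongestPathIn.two_mul_le_length {k : ℕ} (h : G.IsLongestPathIn A L)
    (hL : 0 < L.length) (hconn : ∀ u ∈ A, ∀ v ∈ A, (G.restrict A).Reachable u v)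
    (hdeg : ∀ v ∈ A, k ≤ (G.restrict A).degree v) (hA : 2 * k ≤ #A) : 2 * k ≤ L.length := by
  by_contra! hlong
  have hLA := h.1.2.2
  obtain ⟨P, Q, hP, hQ, rfl, hhead, hlast⟩ := h.exists_crossing hL hlong
    (hdeg _ (hLA _ (List.getElem_mem _))) (hdeg _ (hLA _ (List.getElem_mem _)))
  have := G.symm
  have hcyc := h.1.1.cycleChain_append_reverse hP hQ hhead hlast
  have hperm : (P ++ Q.reverse).Perm (P ++ Q) := (List.reverse_perm Q).append_left P
  obtain ⟨w, c, hwc, hw, hc⟩ := exists_restrict_adj_of_length_lt hconn hLA (by simp [hP]) (by omega)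
  obtain ⟨L', hL', hlen⟩ := exists_isPathIn_length_succ_of_cycleChain
    (hperm.nodup_iff.mpr h.1.2.1) (fun v hv => hLA v (hperm.subset hv)) hcyc hwc.2.1
    (fun h => hw (hperm.subset h)) (hperm.symm.subset hc) hwc.1
  have := h.2 L' hL'
  rw [hperm.length_eq] at hlen
  omega

theorem contains_pathGraph_of_reachable_of_le_degree {k : ℕ}
    (hconn : ∀ u ∈ A, ∀ v ∈ A, (G.restrict A).Reachable u v)
    (hdeg : ∀ v ∈ A, k ≤ (G.restrict A).degree v) (hA : 2 * k ≤ #A) :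
    Contains G (pathGraph (2 * k)) := by
  rcases A.eq_empty_or_nonempty with rfl | hAne
  · obtain rfl : k = 0 := by simpa using hA
    exact ⟨Fin.elim0, fun i => i.elim0, fun i => i.elim0⟩
  obtain ⟨L, hL, hLpos⟩ := exists_isLongestPathIn (G := G) hAne
  have hlong := hL.two_mul_le_length hLpos hconn hdeg hA
  have htake : G.IsPathIn A (L.take (2 * k)) := ⟨hL.1.1.take _,
    hL.1.2.1.sublist (List.take_sublist _ _), fun v hv => hL.1.2.2 v (List.mem_of_mem_take hv)⟩
  have := htake.contains_pathGraph
  rwa [List.length_take, min_eq_left hlong] at this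

/-- Erdős–Gallai for `P_{2k}`. -/
theorem edgesWithin_le_of_not_contains_pathGraph {k : ℕ}
    (hP : ¬ Contains G (pathGraph (2 * k))) (A : Finset V) :
    G.edgesWithin A ≤ (k - 1) * #A := by
  induction A using Finset.strongInduction with
  | _ A ih =>
  by_cases hsmall : #A < 2 * k
  · exact G.edgesWithin_le_of_card_lt hsmall
  by_cases hlow : ∃ v ∈ A, (G.restrict A).degree v < k
  · obtain ⟨v, hv, hdeg⟩ := hlow
    have := G.edgesWithin_le_add_degree hv
    have := ih _ (erase_ssubset hv)
    rw [card_erase_of_mem hv] at this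
    have : (k - 1) * (#A - 1) + (k - 1) = (k - 1) * #A := by
      rw [← Nat.mul_add_one, Nat.sub_add_cancel (card_pos.mpr ⟨v, hv⟩)]
    omega
  by_cases hconn : ∀ u ∈ A, ∀ v ∈ A, (G.restrict A).Reachable u v
  · push Not at hlow
    exact (hP (contains_pathGraph_of_reachable_of_le_degree hconn hlow (by omega))).elim
  push Not at hconn
  obtain ⟨u, hu, v, hv, huv⟩ := hconn
  set C := A.filter ((G.restrict A).Reachable u)
  have hCA : C ⊆ A := filter_subset _ _
  have hcross : ∀ x ∈ C, ∀ y ∈ A \ C, ¬ G.Adj x y := by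
    intro x hx y hy hxy
    simp only [C, mem_sdiff, mem_filter] at hx hy
    exact hy.2 ⟨hy.1, hx.2.trans (Adj.reachable ⟨hxy, hx.1, hy.1⟩)⟩
  have hvC : v ∉ C := fun h => huv (mem_filter.mp h).2
  calc G.edgesWithin A ≤ G.edgesWithin C + G.edgesWithin (A \ C) :=
        G.edgesWithin_le_add_of_forall_not_adj hcross
    _ ≤ (k - 1) * #C + (k - 1) * #(A \ C) :=
        add_le_add (ih C (ssubset_of_subset_of_ne hCA fun h => hvC (h ▸ hv)))
          (ih _ (sdiff_ssubset hCA ⟨u, mem_filter.mpr ⟨hu, .refl u⟩⟩))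
    _ = (k - 1) * #A := by rw [← mul_add, add_comm, card_sdiff_add_card_eq_card hCA]

end Rotation

end SimpleGraph

theorem Fin.card_filter_val_lt_of_le {n a : ℕ} (ha : a ≤ n) :
    #({x | (x : ℕ) < a} : Finset (Fin n)) = a := by
  simp [Fin.card_filter_val_lt, ha]

/-- `K_a ∨ \bar K_{n-a}`, with the first `a` vertices as the clique. -/
def completeSplitGraph (n a : ℕ) : SimpleGraph (Fin n) :=
  SimpleGraph.fromRel fun x _ => (x : ℕ) < a

instance (n a : ℕ) : DecidableRel (completeSplitGraph n a).Adj :=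
  fun _ _ => inferInstanceAs (Decidable (_ ∧ _))

namespace completeSplitGraph

variable {n a : ℕ}

@[simp] theorem adj_iff {x y : Fin n} :
    (completeSplitGraph n a).Adj x y ↔ x ≠ y ∧ ((x : ℕ) < a ∨ (y : ℕ) < a) := by
  simp [completeSplitGraph]

theorem isVertexCover :
    (completeSplitGraph n a).IsVertexCover ↑({x | (x : ℕ) < a} : Finset (Fin n)) :=
  fun _ _ h => by simpa using (adj_iff.mp h).2

theorem not_contains_matchingGraph {t : ℕ} (ha : a ≤ n) (ht : a < t) :
    ¬ Contains (completeSplitGraph n a) (matchingGraph t) :=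
  not_contains_matchingGraph_of_isVertexCover _ isVertexCover
    (by rwa [Fin.card_filter_val_lt_of_le ha])

theorem not_contains_pathGraph (ha : a ≤ n) :
    ¬ Contains (completeSplitGraph n a) (pathGraph (2 * (a + 1))) := fun h =>
  not_contains_matchingGraph ha a.lt_succ_self (h.trans (pathGraph_contains_matchingGraph _))

theorem degree_eq (v : Fin n) :
    (completeSplitGraph n a).degree v = if (v : ℕ) < a then n - 1 else min n a := by
  rw [← card_neighborFinset_eq_degree]
  split_ifs with hv
  · have : (completeSplitGraph n a).neighborFinset v = univ.erase v := by
      ext w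
      simp [hv, eq_comm]
    rw [this, card_erase_of_mem (mem_univ v), card_univ, Fintype.card_fin]
  · rw [← Fin.card_filter_val_lt]
    congr 1
    ext w
    simp only [mem_neighborFinset, adj_iff, mem_filter, mem_univ, true_and]
    exact ⟨fun h => h.2.resolve_left hv, fun h => ⟨by rintro rfl; exact hv h, .inr h⟩⟩

theorem card_edgeFinset (ha : a < n) :
    #(completeSplitGraph n a).edgeFinset = a * (n - a) + a.choose 2 := by
  have hsum := (completeSplitGraph n a).sum_degrees_eq_twice_card_edges
  simp only [degree_eq, sum_ite, sum_const, smul_eq_mul, min_eq_right ha.le] at hsum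
  have hcard := card_filter_add_card_filter_not (s := (univ : Finset (Fin n)))
    (fun x : Fin n => (x : ℕ) < a)
  rw [Fin.card_filter_val_lt_of_le ha.le, card_univ, Fintype.card_fin] at hcard
  rw [Fin.card_filter_val_lt_of_le ha.le,
    show #({x | ¬ (x : ℕ) < a} : Finset (Fin n)) = n - a by omega, Nat.mul_comm (n - a)] at hsum
  have hchoose : 2 * a.choose 2 = a * (a - 1) := by
    rw [Nat.choose_two_right, Nat.mul_div_cancel' (Nat.even_mul_pred_self a).two_dvd]
  have : a * (n - 1) = a * (n - a) + a * (a - 1) := by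
    rcases a.eq_zero_or_pos with rfl | ha0
    · simp
    · rw [← Nat.mul_add, show n - a + (a - 1) = n - 1 by omega]
  omega

end completeSplitGraph

namespace SimpleGraph

variable {V : Type*} {G : SimpleGraph V} [Fintype V] [DecidableRel G.Adj]

theorem sum_degree_le_of_neighborFinset_subset (a : ℕ) {B W : Finset V}
    (hW : ∀ w ∈ W, G.neighborFinset w ⊆ B) :
    ∑ w ∈ W, G.degree w ≤
      (a - 1) * #W + #{w ∈ W | G.degree w = a} + #B * #{w ∈ W | a + 1 ≤ G.degree w} := by
  have hpt : ∀ w ∈ W, G.degree w ≤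
      (a - 1) + (if G.degree w = a then 1 else 0) + (if a + 1 ≤ G.degree w then #B else 0) :=
    fun w hw => by
      have : G.degree w ≤ #B := card_neighborFinset_eq_degree G w ▸ card_le_card (hW w hw)
      split_ifs <;> omega
  refine (sum_le_sum hpt).trans_eq ?_
  simp only [sum_add_distrib, sum_const, smul_eq_mul, sum_boole, Nat.cast_id, sum_ite]
  ring

variable [DecidableEq V]

theorem edgesWithin_le_of_neighborFinset_subset {S D : Finset V} (hSD : S ⊆ D)
    (hN : ∀ w ∈ D \ S, G.neighborFinset w ⊆ S) :
    G.edgesWithin D ≤ (#S).choose 2 + #S * (#D - #S) := by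
  have hdeg : ∀ w ∈ D \ S, (G.restrict D).degree w ≤ #S := fun w hw =>
    (G.degree_restrict_le D w).trans (card_le_card (inter_subset_left.trans (hN w hw)))
  calc G.edgesWithin D ≤ G.edgesWithin S + ∑ w ∈ D \ S, (G.restrict D).degree w :=
        G.edgesWithin_le_add_sum_degree D S
    _ ≤ (#S).choose 2 + ∑ _w ∈ D \ S, #S :=
        add_le_add (G.edgesWithin_le_choose S) (sum_le_sum hdeg)
    _ = (#S).choose 2 + #S * (#D - #S) := by
        rw [sum_const, card_sdiff_of_subset hSD, smul_eq_mul, mul_comm]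

theorem neighborFinset_subset_of_adj {a : ℕ} (hP : ¬ Contains G (pathGraph (2 * (a + 1))))
    {S : Finset V} (hS : #S = a) (hX : a + 2 ≤ #{v | G.neighborFinset v = S}) {u z : V}
    (hu : u ∈ S) (hz : z ∉ S) (huz : G.Adj u z) : G.neighborFinset z ⊆ S := by
  intro z' hz'
  by_contra hz'S
  refine hP ?_
  rw [mul_add_one]
  refine contains_pathGraph_of_biclique_of_adj_adj hS hX ?_ ?_ hu hz hz'S huz
    ((mem_neighborFinset _ _ _).mp hz')
  · refine Finset.disjoint_left.mpr fun x hx hxS => ?_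
    rw [(mem_filter.mp hx).2.symm, mem_neighborFinset] at hxS
    exact G.irrefl hxS
  · intro x hx t ht
    rwa [← mem_neighborFinset, (mem_filter.mp hx).2]

theorem card_edgeFinset_le_of_neighborFinset_eq {a : ℕ}
    (hP : ¬ Contains G (pathGraph (2 * (a + 1)))) {S : Finset V} (hS : #S = a)
    (hX : a + 2 ≤ #{v | G.neighborFinset v = S}) :
    #G.edgeFinset ≤ a * (Fintype.card V - a) + a.choose 2 := by
  set D := S ∪ ({z | ∃ u ∈ S, G.Adj u z} : Finset V)
  have hSD : S ⊆ D := subset_union_left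
  have hN : ∀ w ∈ D \ S, G.neighborFinset w ⊆ S := fun w hw => by
    simp only [D, mem_sdiff, mem_union, mem_filter, mem_univ, true_and] at hw
    obtain ⟨u, hu, huw⟩ := hw.1.resolve_left hw.2
    exact neighborFinset_subset_of_adj hP hS hX hu hw.2 huw
  have hcross : ∀ x ∈ D, ∀ y ∈ univ \ D, ¬ G.Adj x y := by
    intro x hx y hy hxy
    simp only [D, mem_sdiff, mem_union, mem_filter, mem_univ, true_and, not_or] at hx hy
    by_cases hxS : x ∈ S
    · exact hy.2 ⟨x, hxS, hxy⟩
    · exact hy.1 (hN x (by simpa [D, hxS] using hx) ((mem_neighborFinset _ _ _).mpr hxy))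
  have hSD' : a ≤ #D := hS ▸ card_le_card hSD
  have hDV : #D ≤ Fintype.card V := card_le_univ D
  calc #G.edgeFinset = G.edgesWithin univ := G.edgesWithin_univ.symm
    _ ≤ G.edgesWithin D + G.edgesWithin (univ \ D) :=
        G.edgesWithin_le_add_of_forall_not_adj hcross
    _ ≤ (a.choose 2 + a * (#D - a)) + a * (Fintype.card V - #D) := by
        refine add_le_add (hS ▸ edgesWithin_le_of_neighborFinset_subset hSD hN) ?_
        simpa [card_sdiff_of_subset (subset_univ D)]
          using edgesWithin_le_of_not_contains_pathGraph hP (univ \ D)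
    _ = a * (Fintype.card V - a) + a.choose 2 := by
        rw [add_assoc, ← mul_add, add_comm,
          show #D - a + (Fintype.card V - #D) = Fintype.card V - a by omega]

theorem card_le_of_le_degree_of_neighborFinset_subset {k : ℕ}
    (hP : ¬ Contains G (pathGraph (2 * k))) {B W : Finset V} (hWB : Disjoint W B)
    (hW : ∀ w ∈ W, k ≤ G.degree w ∧ G.neighborFinset w ⊆ B) :
    #W ≤ (k - 1) * (#B).choose k := by
  choose! T hTN hTk using fun w (hw : w ∈ W) =>
    exists_subset_card_eq ((card_neighborFinset_eq_degree G w).symm ▸ (hW w hw).1)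
  have hfiber : ∀ T₀ ∈ W.image T, #{w ∈ W | T w = T₀} ≤ k - 1 := by
    intro T₀ hT₀
    obtain ⟨w₀, hw₀, rfl⟩ := mem_image.mp hT₀
    by_contra! hbig
    obtain ⟨X, hX, hXk⟩ := exists_subset_card_eq (show k ≤ #{w ∈ W | T w = T w₀} by omega)
    refine hP (contains_pathGraph_of_biclique hXk (hTk w₀ hw₀) ?_ fun x hx t ht => ?_)
    · exact disjoint_of_subset_left (hX.trans (filter_subset _ _))
        (disjoint_of_subset_right ((hTN w₀ hw₀).trans (hW w₀ hw₀).2) hWB)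
    · obtain ⟨hxW, hxT⟩ := mem_filter.mp (hX hx)
      exact (mem_neighborFinset _ _ _).mp (hTN x hxW (hxT ▸ ht))
  calc #W ≤ (k - 1) * #(W.image T) := card_le_mul_card_image W (k - 1) hfiber
    _ ≤ (k - 1) * #(B.powersetCard k) := by
        refine Nat.mul_le_mul_left _ (card_le_card fun T₀ hT₀ => ?_)
        obtain ⟨w, hw, rfl⟩ := mem_image.mp hT₀
        exact mem_powersetCard.mpr ⟨(hTN w hw).trans (hW w hw).2, hTk w hw⟩
    _ = (k - 1) * (#B).choose k := by rw [card_powersetCard]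

theorem card_le_of_degree_eq_of_neighborFinset_subset {a : ℕ}
    (hpop : ∀ S : Finset V, #S = a → #{v | G.neighborFinset v = S} ≤ a + 1) {B W : Finset V}
    (hW : ∀ w ∈ W, G.degree w = a ∧ G.neighborFinset w ⊆ B) :
    #W ≤ (a + 1) * (#B).choose a := by
  have hfiber : ∀ S ∈ W.image fun w => G.neighborFinset w,
      #{w ∈ W | G.neighborFinset w = S} ≤ a + 1 := by
    intro S hS
    obtain ⟨w, hw, rfl⟩ := mem_image.mp hS
    refine (card_le_card fun v hv => ?_).trans
      (hpop _ ((card_neighborFinset_eq_degree G w).trans (hW w hw).1))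
    simpa using (mem_filter.mp hv).2
  calc #W ≤ (a + 1) * #(W.image fun w => G.neighborFinset w) :=
        card_le_mul_card_image W (a + 1) hfiber
    _ ≤ (a + 1) * #(B.powersetCard a) := by
        refine Nat.mul_le_mul_left _ (card_le_card fun S hS => ?_)
        obtain ⟨w, hw, rfl⟩ := mem_image.mp hS
        exact mem_powersetCard.mpr
          ⟨(hW w hw).2, (card_neighborFinset_eq_degree G w).trans (hW w hw).1⟩
    _ = (a + 1) * (#B).choose a := by rw [card_powersetCard]

theorem card_edgeFinset_le_of_isVertexCover {a : ℕ}
    (hP : ¬ Contains G (pathGraph (2 * (a + 1))))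
    (hpop : ∀ S : Finset V, #S = a → #{v | G.neighborFinset v = S} ≤ a + 1) {B : Finset V}
    (hB : G.IsVertexCover B) :
    #G.edgeFinset ≤ (#B).choose 2 + (a + 1) * (#B).choose a + #B * (a * (#B).choose (a + 1)) +
      (a - 1) * Fintype.card V := by
  set W := univ \ B
  have hWB : ∀ w ∈ W, G.neighborFinset w ⊆ B := fun w hw v hv => by
    have := hB ((mem_neighborFinset _ _ _).mp hv)
    simp_all [W]
  have hmid := card_le_of_degree_eq_of_neighborFinset_subset hpop (W := {w ∈ W | G.degree w = a})
    fun w hw => ⟨(mem_filter.mp hw).2, hWB w (mem_filter.mp hw).1⟩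
  have hhigh := card_le_of_le_degree_of_neighborFinset_subset hP (B := B)
    (W := {w ∈ W | a + 1 ≤ G.degree w}) (disjoint_of_subset_left (filter_subset _ _) sdiff_disjoint)
    fun w hw => ⟨(mem_filter.mp hw).2, hWB w (mem_filter.mp hw).1⟩
  rw [Nat.add_one_sub_one] at hhigh
  have hsum := sum_degree_le_of_neighborFinset_subset a hWB
  have := Nat.mul_le_mul_left (a - 1) (card_le_univ W)
  have := Nat.mul_le_mul_left #B hhigh
  calc #G.edgeFinset = G.edgesWithin univ := G.edgesWithin_univ.symm
    _ ≤ G.edgesWithin B + ∑ w ∈ W, (G.restrict univ).degree w :=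
        G.edgesWithin_le_add_sum_degree _ _
    _ ≤ (#B).choose 2 + ∑ w ∈ W, G.degree w := by
        refine add_le_add (G.edgesWithin_le_choose B) (sum_le_sum fun w _ => ?_)
        simpa using G.degree_restrict_le univ w
    _ ≤ _ := by omega

/-- The first three terms are the excess over `(a - 1) n` allowed by
`card_edgeFinset_le_of_isVertexCover` for a vertex cover of size `b`; the square pays for the loss
in `add_mul_le_of_add_sq_le`. -/
def extremalThreshold (a b : ℕ) : ℕ :=
  b.choose 2 + (a + 1) * b.choose a + b * (a * b.choose (a + 1)) + (a + 1) ^ 2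

theorem add_mul_le_of_add_sq_le {a n K : ℕ} (ha : 1 ≤ a) (hn : K + (a + 1) ^ 2 ≤ n) :
    K + (a - 1) * n ≤ a * (n - a) + a.choose 2 := by
  obtain ⟨c, rfl⟩ : ∃ c, a = c + 1 := ⟨a - 1, by omega⟩
  have := Nat.le_self_pow two_ne_zero (c + 1 + 1)
  obtain ⟨r, rfl⟩ : ∃ r, n = c + 1 + r := ⟨n - (c + 1), by omega⟩
  simp only [Nat.add_sub_cancel, Nat.add_sub_cancel_left]
  nlinarith

theorem card_edgeFinset_le_of_not_contains {a s : ℕ} (ha : 1 ≤ a)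
    (hP : ¬ Contains G (pathGraph (2 * (a + 1)))) (hM : ¬ Contains G (matchingGraph (s + 1)))
    (hn : extremalThreshold a (2 * s) ≤ Fintype.card V) :
    #G.edgeFinset ≤ a * (Fintype.card V - a) + a.choose 2 := by
  by_cases hpop : ∃ S : Finset V, #S = a ∧ a + 2 ≤ #{v | G.neighborFinset v = S}
  · obtain ⟨S, hS, hX⟩ := hpop
    exact card_edgeFinset_le_of_neighborFinset_eq hP hS hX
  push Not at hpop
  obtain ⟨B, hBs, hB⟩ := exists_isVertexCover_card_le_of_not_contains_matchingGraph s hM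
  refine (card_edgeFinset_le_of_isVertexCover hP (fun S hS => Nat.le_of_lt_succ (hpop S hS))
    hB).trans (le_trans ?_ (add_mul_le_of_add_sq_le ha hn))
  gcongr

end SimpleGraph

theorem edgeCount_eq_card_edgeFinset {V : Type*} [Fintype V] (G : SimpleGraph V)
    [DecidableRel G.Adj] : edgeCount G = #G.edgeFinset := by
  rw [edgeCount, ← coe_edgeFinset, Set.ncard_coe_finset]

theorem exNum_eq_of_isGreatest {n m : ℕ} {P : SimpleGraph (Fin n) → Prop}
    (h : IsGreatest {m | ∃ G, P G ∧ m = edgeCount G} m) : exNum n P = m :=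
  h.csSup_eq

/-- For `2 ≤ ℓ ≤ s` and sufficiently large `n`,
`ex(n, {P_{2ℓ}, M_{s+1}}) = (ℓ − 1)(n − ℓ + 1) + C(ℓ−1,2)`. -/
theorem even_path_extremal (ℓ s : ℕ) (hl : 2 ≤ ℓ) (hls : ℓ ≤ s) :
    ∃ n₀ : ℕ, ∀ n : ℕ, n₀ ≤ n →
      exNum n (fun G =>
          ¬ Contains G (pathGraph (2 * ℓ)) ∧ ¬ Contains G (matchingGraph (s + 1))) =
        (ℓ - 1) * (n - ℓ + 1) + Nat.choose (ℓ - 1) 2 := by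
  obtain ⟨a, rfl⟩ : ∃ a, ℓ = a + 1 := ⟨ℓ - 1, by omega⟩
  refine ⟨extremalThreshold a (2 * s), fun n hn => ?_⟩
  have han : a < n := by
    have := Nat.le_self_pow two_ne_zero (a + 1)
    unfold extremalThreshold at hn
    omega
  rw [Nat.add_sub_cancel, show n - (a + 1) + 1 = n - a by omega]
  refine exNum_eq_of_isGreatest ⟨⟨completeSplitGraph n a, ⟨?_, ?_⟩, ?_⟩, ?_⟩
  · exact completeSplitGraph.not_contains_pathGraph han.le
  · exact completeSplitGraph.not_contains_matchingGraph han.le (by omega)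
  · rw [edgeCount_eq_card_edgeFinset, completeSplitGraph.card_edgeFinset han]
  · rintro _ ⟨G, ⟨hP, hM⟩, rfl⟩
    classical
    rw [edgeCount_eq_card_edgeFinset]
    simpa using G.card_edgeFinset_le_of_not_contains (by omega) hP hM (by simpa using hn)
end
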